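/- Let G = (V, E) be a finite directed graph with a designated source s ∈ V from which every vertex is reachable. For i ≥ 1, let L_i be the set of vertices of V ∖ {s} whose hop-distance from s is exactly i, and let d − 1 be the maximum hop-distance from s to any vertex. Then every linear ordering of V ∖ {s} that lists all vertices of L_1 first (in any order), then all vertices of L_2 (in any order), and so on up to L_{d−1}, is a linearization of (G, s). -/

import Mathlib

variable {V : Type*}

/-- `p` is a directed walk from `s` to `v` in the digraph with edge relation `E`:
`p` is the (nonempty) list of visited vertices, starting at `s`, ending at `v`,
and each consecutive pair of vertices is an edge. -/
def IsWalk (E : V → V → Prop) (s v : V) (p : List V) : Prop :=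
  p.Chain' E ∧ p.head? = some s ∧ p.getLast? = some v

/-- `v` is reachable from `s` by a directed walk. -/
def DiReachable (E : V → V → Prop) (s v : V) : Prop :=
  ∃ p, IsWalk E s v p

/-- Hop-distance from `s` to `v`: the minimum number of edges on a directed path
(equivalently, walk) from `s` to `v`.  A walk on `k + 1` vertices has `k` edges. -/
noncomputable def hopDist (E : V → V → Prop) (s v : V) : ℕ :=
  sInf {k | ∃ p, IsWalk E s v p ∧ p.length = k + 1}

/-- The total weight of a walk `p` under the edge weighting `w`:
the sum of `w` over the consecutive pairs of vertices of `p`. -/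
def walkWeight (w : V → V → ℝ) (p : List V) : ℝ :=
  ((p.zip p.tail).map fun e => w e.1 e.2).sum

/-- Weighted distance from `s` to `v` under the weighting `w`:
the minimum total weight of a directed path from `s` to `v`. -/
noncomputable def weightedDist (E : V → V → Prop) (w : V → V → ℝ) (s v : V) : ℝ :=
  sInf {c | ∃ p, IsWalk E s v p ∧ p.Nodup ∧ walkWeight w p = c}

/-- `L` is a linearization of `(G, s)`: `L` is a linear ordering (a duplicate-free list)
of `V \ {s}`, and there exists a positive edge weighting `w` of `G` such that the weighted
distances from `s` of all vertices `≠ s` are pairwise distinct and `L` lists `V \ {s}`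
in increasing order of weighted distance from `s`. -/
def IsLinearization (E : V → V → Prop) (s : V) (L : List V) : Prop :=
  L.Nodup ∧ (∀ v, v ∈ L ↔ v ≠ s) ∧
  ∃ w : V → V → ℝ,
    (∀ u v, E u v → 0 < w u v) ∧
    (∀ x, x ≠ s → ∀ y, y ≠ s → x ≠ y →
      weightedDist E w s x ≠ weightedDist E w s y) ∧
    L.Pairwise (fun x y => weightedDist E w s x < weightedDist E w s y)

/-- `ℓ(G, s)`: the number of linearizations of `(G, s)`. -/
noncomputable def numLinearizations (E : V → V → Prop) (s : V) : ℕ :=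
  {L : List V | IsLinearization E s L}.ncard

/-- `T` is a spanning arborescence of `(G, s)`: a subset of the edges of `G` such that
every vertex `v ≠ s` is reachable from `s` in `T` and has exactly one incoming `T`-edge,
and `s` has no incoming `T`-edge. -/
def IsArborescence (E T : V → V → Prop) (s : V) : Prop :=
  (∀ u v, T u v → E u v) ∧
  (∀ u, ¬ T u s) ∧
  (∀ v, v ≠ s → DiReachable T s v ∧ ∃! u, T u v)

lemma walkWeight_singleton (w : V → V → ℝ) (a : V) : walkWeight w [a] = 0 := by
  simp [walkWeight]

lemma walkWeight_cons_cons (w : V → V → ℝ) (x y : V) (t : List V) :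
    walkWeight w (x :: y :: t) = w x y + walkWeight w (y :: t) := by
  simp [walkWeight]

lemma le_walkWeight (w : V → V → ℝ) (f : V → ℝ)
    (hw : ∀ u v, f v - f u ≤ w u v) :
    ∀ (p : List V) (a b : V), p.head? = some a → p.getLast? = some b →
      f b - f a ≤ walkWeight w p
  | [], a, b, ha, _ => by simp at ha
  | [x], a, b, ha, hb => by
      simp only [List.head?_cons, Option.some.injEq] at ha
      simp only [List.getLast?_singleton, Option.some.injEq] at hb
      subst ha; subst hb; simp [walkWeight_singleton]
  | x :: y :: t, a, b, ha, hb => by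
      simp only [List.head?_cons, Option.some.injEq] at ha
      subst ha
      rw [List.getLast?_cons_cons] at hb
      have ih := le_walkWeight w f hw (y :: t) y b rfl hb
      rw [walkWeight_cons_cons]
      have := hw x y
      linarith

lemma walkWeight_eq_of_chain (w : V → V → ℝ) (f : V → ℝ) :
    ∀ (p : List V) (a b : V), p.Chain' (fun u v => w u v = f v - f u) →
      p.head? = some a → p.getLast? = some b →
      walkWeight w p = f b - f a
  | [], a, b, _, ha, _ => by simp at ha
  | [x], a, b, _, ha, hb => by
      simp only [List.head?_cons, Option.some.injEq] at ha
      simp only [List.getLast?_singleton, Option.some.injEq] at hb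
      subst ha; subst hb; simp [walkWeight_singleton]
  | x :: y :: t, a, b, hc, ha, hb => by
      simp only [List.head?_cons, Option.some.injEq] at ha
      subst ha
      rw [List.getLast?_cons_cons] at hb
      dsimp only [List.Chain'] at hc; rw [List.isChain_cons_cons] at hc
      have ih := walkWeight_eq_of_chain w f (y :: t) y b hc.2 rfl hb
      rw [walkWeight_cons_cons, hc.1, ih]
      ring

lemma IsWalk.append_edge {E : V → V → Prop} {s u v : V} {p : List V}
    (hp : IsWalk E s u p) (huv : E u v) : IsWalk E s v (p ++ [v]) := by
  obtain ⟨hc, hh, hl⟩ := hp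
  have hne : p ≠ [] := by rintro rfl; simp at hh
  refine ⟨?_, ?_, List.getLast?_concat⟩
  · dsimp only [List.Chain']; rw [List.isChain_append]
    refine ⟨hc, List.isChain_singleton v, ?_⟩
    intro x hx y hy
    simp only [List.head?_cons, Option.mem_def, Option.some.injEq] at hy
    rw [hl] at hx
    simp only [Option.mem_def, Option.some.injEq] at hx
    subst hx; subst hy; exact huv
  · rw [List.head?_append_of_ne_nil _ hne]; exact hh

lemma hopDist_nonempty {E : V → V → Prop} {s v : V} {q : List V} (hq : IsWalk E s v q) :
    {k | ∃ p, IsWalk E s v p ∧ p.length = k + 1}.Nonempty := by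
  have hne : q ≠ [] := by rintro rfl; simp [IsWalk] at hq
  exact ⟨q.length - 1, q, hq, by
    have := List.length_pos_iff.mpr hne; omega⟩

lemma hopDist_le_succ {E : V → V → Prop} {s u v : V} {q : List V}
    (hq : IsWalk E s u q) (huv : E u v) : hopDist E s v ≤ hopDist E s u + 1 := by
  obtain ⟨p, hp, hlen⟩ := Nat.sInf_mem (hopDist_nonempty hq)
  apply Nat.sInf_le
  exact ⟨p ++ [v], hp.append_edge huv, by simp [hlen, hopDist]⟩


/--
Let `G = (V, E)` be a finite directed graph with a designated source `s`
from which every vertex is reachable.  For `i ≥ 1`, let `L_i` be the set of vertices of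
`V \ {s}` with hop-distance exactly `i` from `s`, and let `d − 1` be the maximum
hop-distance from `s` to any vertex.  Then every linear ordering of `V \ {s}` that lists
all vertices of `L_1` first (in any order), then all of `L_2`, and so on up to `L_{d−1}`
— i.e. every duplicate-free listing of `V \ {s}` that is weakly sorted by hop-distance —
is a linearization of `(G, s)`.
-/
theorem isLinearization_of_sorted_by_hopDist
    [Fintype V] [DecidableEq V] (E : V → V → Prop) (s : V)
    (hreach : ∀ v, DiReachable E s v)
    (d : ℕ) (hd : 1 ≤ d)
    (hdmax : IsGreatest {k | ∃ v, v ≠ s ∧ hopDist E s v = k} (d - 1))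
    (L : List V) (hnd : L.Nodup) (hmem : ∀ v, v ∈ L ↔ v ≠ s)
    (hsort : L.Pairwise (fun u v => hopDist E s u ≤ hopDist E s v)) :
    IsLinearization E s L := by
  classical
  set N := L.length with hN
  set ε : ℝ := 1 / (2 * (N + 1)) with hεdef
  have hε : 0 < ε := by positivity
  set f : V → ℝ := fun v =>
    if v = s then 0 else (hopDist E s v : ℝ) + ε * (L.idxOf v + 1) with hf
  set w : V → V → ℝ := fun u v => if f u < f v then f v - f u else 1 with hw
  -- basic bounds on the ε-term
  have hidx : ∀ v, v ≠ s → 0 < ε * (L.idxOf v + 1) ∧ ε * (L.idxOf v + 1) < 1/2 := by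
    intro v hv
    have hvL : v ∈ L := (hmem v).mpr hv
    have h1 : L.idxOf v < N := List.idxOf_lt_length_iff.mpr hvL
    constructor
    · positivity
    · have h2 : (L.idxOf v : ℝ) + 1 ≤ N := by exact_mod_cast h1
      have : ε * (L.idxOf v + 1) ≤ ε * N := by nlinarith
      have h3 : ε * N < 1/2 := by
        rw [hεdef]
        rw [div_mul_eq_mul_div, div_lt_div_iff₀ (by positivity) (by norm_num)]
        ring_nf
        nlinarith [Nat.cast_nonneg (α := ℝ) N]
      linarith
  have hfs : f s = 0 := by simp [hf]
  have hflb : ∀ v, v ≠ s → (hopDist E s v : ℝ) < f v := by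
    intro v hv; rw [hf]; simp only [if_neg hv]; have := (hidx v hv).1; linarith
  have hfub : ∀ v, v ≠ s → f v < (hopDist E s v : ℝ) + 1/2 := by
    intro v hv; rw [hf]; simp only [if_neg hv]; have := (hidx v hv).2; linarith
  have hmono : ∀ u v, hopDist E s u < hopDist E s v → v ≠ s → f u < f v := by
    intro u v huv hv
    have hv' := hflb v hv
    by_cases hu : u = s
    · rw [hu, hfs]
      have : (0:ℝ) ≤ (hopDist E s v : ℝ) := Nat.cast_nonneg _
      linarith
    · have hu' := hfub u hu
      have : (hopDist E s u : ℝ) + 1 ≤ (hopDist E s v : ℝ) := by exact_mod_cast huv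
      linarith
  have hwpos : ∀ u v, 0 < w u v := by
    intro u v; rw [hw]; dsimp only; split
    · linarith [show f u < f v from ‹_›]
    · norm_num
  have hwge : ∀ u v, f v - f u ≤ w u v := by
    intro u v; rw [hw]; dsimp only; split
    · linarith
    · rename_i hnlt
      have : f v ≤ f u := le_of_not_gt hnlt
      linarith
  have hs0 : hopDist E s s = 0 := by
    apply Nat.sInf_eq_zero.mpr
    left
    exact ⟨[s], ⟨List.isChain_singleton s, rfl, rfl⟩, rfl⟩
  -- existence of optimal walks
  have claim : ∀ k v, hopDist E s v = k →
      ∃ p, IsWalk E s v p ∧ p.Chain' (fun a b => f a < f b) := by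
    intro k
    induction k with
    | zero =>
      intro v hv
      obtain ⟨q, hq⟩ := hreach v
      obtain ⟨p, hp, hlen⟩ := Nat.sInf_mem (hopDist_nonempty hq)
      rw [show sInf {k | ∃ p, IsWalk E s v p ∧ p.length = k + 1} = hopDist E s v from rfl,
        hv] at hlen
      obtain ⟨x, rfl⟩ := List.length_eq_one_iff.mp hlen
      exact ⟨[x], hp, List.isChain_singleton x⟩
    | succ k ih =>
      intro v hv
      have hvs : v ≠ s := by rintro rfl; rw [hs0] at hv; exact (Nat.succ_ne_zero k) hv.symm
      obtain ⟨q0, hq0⟩ := hreach v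
      obtain ⟨p, hp, hlen⟩ := Nat.sInf_mem (hopDist_nonempty hq0)
      rw [show sInf {k | ∃ p, IsWalk E s v p ∧ p.length = k + 1} = hopDist E s v from rfl,
        hv] at hlen
      have hpne : p ≠ [] := by intro h; rw [h] at hlen; simp at hlen
      have hlastv : p.getLast hpne = v := by
        have := hp.2.2
        rw [List.getLast?_eq_getLast hpne] at this
        exact Option.some.inj this
      have hpeq : p.dropLast ++ [v] = p := by
        rw [← hlastv]; exact List.dropLast_append_getLast hpne
      set q := p.dropLast with hqdef
      have hqlen : q.length = k + 1 := by
        rw [hqdef, List.length_dropLast, hlen]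
        omega
      have hqne : q ≠ [] := by
        intro h; rw [h] at hqlen; simp at hqlen
      set u := q.getLast hqne with hudef
      have hqlast : q.getLast? = some u := List.getLast?_eq_getLast hqne
      have hchain : (q ++ [v]).Chain' E := by rw [hpeq]; exact hp.1
      dsimp only [List.Chain'] at hchain; rw [List.isChain_append] at hchain
      have hEuv : E u v := hchain.2.2 u hqlast v rfl
      have hqhead : q.head? = some s := by
        have := hp.2.1
        rw [← hpeq, List.head?_append_of_ne_nil _ hqne] at this
        exact this
      have hqwalk : IsWalk E s u q := ⟨hchain.1, hqhead, hqlast⟩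
      have hule : hopDist E s u ≤ k := Nat.sInf_le ⟨q, hqwalk, hqlen⟩
      have huge : k + 1 ≤ hopDist E s u + 1 := by
        rw [← hv]; exact hopDist_le_succ hqwalk hEuv
      have hueq : hopDist E s u = k := le_antisymm hule (by omega)
      obtain ⟨p', hp', hc'⟩ := ih u hueq
      refine ⟨p' ++ [v], hp'.append_edge hEuv, ?_⟩
      dsimp only [List.Chain']; rw [List.isChain_append]
      refine ⟨hc', List.isChain_singleton v, ?_⟩
      intro x hx y hy
      rw [hp'.2.2] at hx
      simp only [Option.mem_def, Option.some.injEq, List.head?_cons] at hx hy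
      subst hx; subst hy
      exact hmono u v (by omega) hvs
  -- the weighted distance equals f
  have hwd : ∀ v, v ≠ s → weightedDist E w s v = f v := by
    intro v hv
    obtain ⟨p, hp, hc⟩ := claim (hopDist E s v) v rfl
    have hcw : p.Chain' (fun a b => w a b = f b - f a) := by
      apply hc.imp
      intro a b hab
      rw [hw]; dsimp only; rw [if_pos hab]
    have hweq : walkWeight w p = f v :=
      (walkWeight_eq_of_chain w f p s v hcw hp.2.1 hp.2.2).trans (by rw [hfs]; ring)
    have hnodup : p.Nodup := by
      haveI : IsTrans V (fun a b => f a < f b) := ⟨fun _ _ _ h1 h2 => lt_trans h1 h2⟩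
      have := List.isChain_iff_pairwise.mp hc
      exact this.imp fun h => by rintro rfl; exact lt_irrefl _ h
    apply IsLeast.csInf_eq
    constructor
    · exact ⟨p, hp, hnodup, hweq⟩
    · rintro c ⟨p', hp', _, rfl⟩
      have := le_walkWeight w f hwge p' s v hp'.2.1 hp'.2.2
      rw [hfs] at this; linarith
  refine ⟨hnd, hmem, w, fun u v _ => hwpos u v, ?_, ?_⟩
  · intro x hx y hy hxy
    rw [hwd x hx, hwd y hy]
    rcases lt_trichotomy (hopDist E s x) (hopDist E s y) with h | h | h
    · exact ne_of_lt (hmono x y h hy)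
    · intro hfe
      rw [hf] at hfe
      simp only [if_neg hx, if_neg hy, h] at hfe
      have : (L.idxOf x : ℝ) = (L.idxOf y : ℝ) := by
        have hε' : ε ≠ 0 := ne_of_gt hε
        have h1 := mul_left_cancel₀ hε' (add_left_cancel hfe)
        linarith
      have hxy' : L.idxOf x = L.idxOf y := by exact_mod_cast this
      exact hxy ((List.idxOf_inj ((hmem x).mpr hx)).mp hxy')
    · exact (ne_of_lt (hmono y x h hx)).symm
  · rw [List.pairwise_iff_get]
    intro i j hij
    have hxi : L.get i ∈ L := L.get_mem _
    have hxj : L.get j ∈ L := L.get_mem _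
    have hxis : L.get i ≠ s := (hmem _).mp hxi
    have hxjs : L.get j ≠ s := (hmem _).mp hxj
    rw [hwd _ hxis, hwd _ hxjs]
    have hle : hopDist E s (L.get i) ≤ hopDist E s (L.get j) :=
      List.pairwise_iff_get.mp hsort i j hij
    rcases lt_or_eq_of_le hle with h | h
    · exact hmono _ _ h hxjs
    · rw [hf]
      simp only [if_neg hxis, if_neg hxjs, h]
      have hii : L.idxOf (L.get i) = i := List.get_idxOf hnd i
      have hjj : L.idxOf (L.get j) = j := List.get_idxOf hnd j
      rw [hii, hjj]
      have : (i : ℝ) < (j : ℝ) := by exact_mod_cast hij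
      nlinarith
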